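/- arXiv:2508.05682 — 3 statements merged into one kernel-verified Lean document; each statement's English description precedes it below -/
import Mathlib

section
/- There is no bi-Heyting algebra embedding (injective lattice homomorphism preserving ⇨, \, ⊤, ⊥) of the three-element chain into B × Bool for any bi-Heyting algebra B. -/
local instance : BiheytingAlgebra (Fin 3) := LinearOrder.toBiheytingAlgebra (Fin 3)

/-!
The second coordinate of a bi-Heyting embedding `Fin 3 → B × Bool` would be a bi-Heyting
homomorphism `g : Fin 3 → Bool`. There is none: the middle element `1` has `1ᶜ = ⊥` and `￢1 = ⊤`,
so `g 1 = false` forces `true = (g 1)ᶜ = g 1ᶜ = g ⊥ = false`, and dually `g 1 = true` forces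
`false = ￢(g 1) = g (￢1) = g ⊤ = true`.
-/

namespace BiheytingHom

variable {α β : Type*} [BiheytingAlgebra α] [BiheytingAlgebra β]

variable (α β) in
def snd : BiheytingHom (α × β) β where
  toFun := Prod.snd
  map_sup' _ _ := rfl
  map_inf' _ _ := rfl
  map_himp' _ _ := rfl
  map_sdiff' _ _ := rfl

theorem isEmpty_bool_of_compl_eq_bot_of_hnot_eq_top {a : α} (hc : aᶜ = ⊥) (hn : ￢a = ⊤) :
    IsEmpty (BiheytingHom α Bool) := by
  refine ⟨fun g => ?_⟩
  cases hga : g a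
  · simpa [hc, hga] using map_compl g a
  · simpa [hn, hga, hnot_eq_compl] using map_hnot g a

end BiheytingHom

/-- There is no bi-Heyting algebra embedding of the three-element chain into
`B × Bool` for any bi-Heyting algebra `B`. -/
theorem stmt2 (B : Type*) [BiheytingAlgebra B] :
    ¬ ∃ f : Fin 3 → B × Bool, Function.Injective f ∧
      (∀ a b, f (a ⊓ b) = f a ⊓ f b) ∧ (∀ a b, f (a ⊔ b) = f a ⊔ f b) ∧
      f ⊤ = ⊤ ∧ f ⊥ = ⊥ ∧
      (∀ a b, f (a ⇨ b) = f a ⇨ f b) ∧ (∀ a b, f (a \ b) = f a \ f b) := by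
  rintro ⟨f, -, hinf, hsup, -, -, himp, hsdiff⟩
  let φ : BiheytingHom (Fin 3) (B × Bool) :=
    { toFun := f, map_sup' := hsup, map_inf' := hinf, map_himp' := himp, map_sdiff' := hsdiff }
  have : IsEmpty (BiheytingHom (Fin 3) Bool) :=
    BiheytingHom.isEmpty_bool_of_compl_eq_bot_of_hnot_eq_top (a := 1) (by decide) (by decide)
  exact this.false ((BiheytingHom.snd B Bool).comp φ)
end

section
/- The three-element chain and the product of the three-element chain with the two-element Boolean algebra do not satisfy the same positive existential sentences: the sentence ∃x (¬x = ⊥ ∧ ∼x = ⊤) holds in the three-element chain but fails in (three-element chain) × Bool. -/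
/-! In a bounded chain every element strictly between `⊥` and `⊤` has pseudocomplement `⊥` and
supplement `⊤`. In a Boolean algebra both negations are the complement, so the two equations
force `⊥ = ⊤`; a product with a nontrivial Boolean factor therefore has no such element, as the
equations hold componentwise. -/

theorem LinearOrder.compl_eq_bot_and_hnot_eq_top_of_bot_lt_of_lt_top {α : Type*} [LinearOrder α]
    [BoundedOrder α] {a : α} (h_bot : ⊥ < a) (h_top : a < ⊤) :
    letI := LinearOrder.toBiheytingAlgebra α
    aᶜ = ⊥ ∧ ￢a = ⊤ :=
  ⟨if_neg h_bot.ne', if_neg h_top.ne⟩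

theorem BooleanAlgebra.not_compl_eq_bot_and_hnot_eq_top {β : Type*} [BooleanAlgebra β]
    [Nontrivial β] (b : β) : ¬(bᶜ = ⊥ ∧ ￢b = ⊤) := by
  rintro ⟨h_compl, h_hnot⟩
  rw [hnot_eq_compl, h_compl] at h_hnot
  exact bot_ne_top h_hnot

theorem Prod.not_compl_eq_bot_and_hnot_eq_top_of_booleanAlgebra {α β : Type*}
    [BiheytingAlgebra α] [BooleanAlgebra β] [Nontrivial β] (x : α × β) :
    ¬(xᶜ = ⊥ ∧ ￢x = ⊤) := fun ⟨h_compl, h_hnot⟩ =>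
  BooleanAlgebra.not_compl_eq_bot_and_hnot_eq_top x.2
    ⟨congrArg Prod.snd h_compl, congrArg Prod.snd h_hnot⟩

/-- The positive existential sentence `∃ x, ¬x = ⊥ ∧ ∼x = ⊤` holds in the
three-element chain but fails in (three-element chain) × Bool. -/
theorem stmt4 :
    (∃ x : Fin 3, xᶜ = ⊥ ∧ ￢x = ⊤) ∧
      ¬ (∃ x : Fin 3 × Bool, xᶜ = ⊥ ∧ ￢x = ⊤) :=
  ⟨⟨1, LinearOrder.compl_eq_bot_and_hnot_eq_top_of_bot_lt_of_lt_top (by decide) (by decide)⟩,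
    fun ⟨x, hx⟩ => Prod.not_compl_eq_bot_and_hnot_eq_top_of_booleanAlgebra x hx⟩
end

section
/- A bi-Heyting algebra in which the quasi-equation (¬x = ⊥ ∧ ∼x = ⊤ → ⊥ = ⊤) fails contains a three-element bi-Heyting subalgebra, namely {⊥, x, ⊤} for the witnessing x, and this subalgebra is isomorphic to the three-element chain. -/
/-- If the quasi-equation `¬x = ⊥ ∧ ∼x = ⊤ → ⊥ = ⊤` fails in a bi-Heyting algebra
`A`, witnessed by `x`, then `{⊥, x, ⊤}` is closed under `⊓`, `⊔`, `⇨`, `\` and is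
order-isomorphic to the three-element chain. -/
theorem stmt14 (A : Type*) [BiheytingAlgebra A] (x : A)
    (hnt : (⊥ : A) ≠ ⊤) (h1 : xᶜ = ⊥) (h2 : ￢x = ⊤) :
    (∀ a ∈ ({⊥, x, ⊤} : Set A), ∀ b ∈ ({⊥, x, ⊤} : Set A),
      a ⊓ b ∈ ({⊥, x, ⊤} : Set A) ∧ a ⊔ b ∈ ({⊥, x, ⊤} : Set A) ∧
      a ⇨ b ∈ ({⊥, x, ⊤} : Set A) ∧ a \ b ∈ ({⊥, x, ⊤} : Set A)) ∧
    Nonempty (({⊥, x, ⊤} : Set A) ≃o Fin 3) := by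
  have hxb : x ≠ ⊥ := by
    rintro rfl
    rw [compl_bot] at h1
    exact hnt h1.symm
  have hxt : x ≠ ⊤ := by
    rintro rfl
    rw [hnot_top] at h2
    exact hnt h2
  have hx0 : (⊥ : A) < x := bot_lt_iff_ne_bot.2 hxb
  have hx1 : x < ⊤ := lt_top_iff_ne_top.2 hxt
  constructor
  · rintro a (rfl | rfl | rfl) b (rfl | rfl | rfl) <;>
      refine ⟨?_, ?_, ?_, ?_⟩ <;>
      simp [himp_self, sdiff_self, himp_bot, h1, h2,
        top_sdiff', sdiff_bot, le_himp_iff, himp_eq_top_iff, hx0.le, hx1.le]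
  · let f : Fin 3 → ({⊥, x, ⊤} : Set A) :=
      ![⟨⊥, by simp⟩, ⟨x, by simp⟩, ⟨⊤, by simp⟩]
    have hmono : StrictMono f := by
      intro i j hij
      fin_cases i <;> fin_cases j <;> simp_all [f] <;>
        first
          | exact hx0
          | exact hx1
          | exact bot_lt_iff_ne_bot.2 (fun h => hnt h.symm)
    have hsurj : Function.Surjective f := by
      rintro ⟨a, (rfl | rfl | rfl)⟩
      · exact ⟨0, rfl⟩
      · exact ⟨1, rfl⟩
      · exact ⟨2, rfl⟩
    exact ⟨(hmono.orderIsoOfSurjective f hsurj).symm⟩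
end
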